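/- Let (X, f1) be an M-space with M a commutative MVS. Let X_{f1} ⊆ X × M × M × X consist of tuples (x1,m1,m2,x2) with m1 + m2 = f1(x1,x2). Define f2 on X_{f1} by f2(p,p) = e and f2((x1,m1,m2,x2),(x3,m3,m4,x4)) = m2 + f1(x2,x3) + m3 for distinct tuples. Then f2 is a quasimetric function on X_{f1}, and f2((x,e,e,x),(y,e,e,y)) = f1(x,y) for all x,y ∈ X. -/

import Mathlib

universe u v w

structure MVS (M : Type u) where
  add : M → M → M
  e : M
  assoc : ∀ a b c : M, add (add a b) c = add a (add b c)
  add_e : ∀ a : M, add a e = a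
  e_add : ∀ a : M, add e a = a
  eq_e_of_add_eq_e : ∀ a b : M, add a b = e → a = e ∧ b = e
  exists_common : ∀ a b : M, a ≠ e → b ≠ e →
    ∃ c, c ≠ e ∧ (∃ d, add c d = a) ∧ (∃ d, add c d = b)
  nontrivial : ∃ a : M, a ≠ e

variable {M : Type u} {X : Type v}

/-- `a ⊴ b` iff there is `c` with `a + c = b`. -/
def MVS.le (S : MVS M) (a b : M) : Prop := ∃ c, S.add a c = b

/-- `a ◁ b` iff there is `c ≠ e` with `a + c = b`. -/
def MVS.lt (S : MVS M) (a b : M) : Prop := ∃ c, c ≠ S.e ∧ S.add a c = b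

def MVS.Commutative (S : MVS M) : Prop := ∀ a b, S.add a b = S.add b a

/-- An MVS is atom-free if it is commutative and every `m ≠ e` admits `n ≠ e` with `n ◁ m`. -/
def MVS.AtomFree (S : MVS M) : Prop :=
  S.Commutative ∧ ∀ m, m ≠ S.e → ∃ n, n ≠ S.e ∧ S.lt n m

/-- A quasimetric function: triangle inequality and `f x x = e`. -/
def IsQuasimetric (S : MVS M) (f : X → X → M) : Prop :=
  (∀ x y z, S.le (f x z) (S.add (f x y) (f y z))) ∧ ∀ x, f x x = S.e

/-- Open ball `B_f(x,m) = {y | f x y ◁ m}`. -/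
def ball (S : MVS M) (f : X → X → M) (x : X) (m : M) : Set X := {y | S.lt (f x y) m}

/-- Closed ball `B̄_f(x,m) = {y | f x y ⊴ m}`. -/
def closedBall (S : MVS M) (f : X → X → M) (x : X) (m : M) : Set X := {y | S.le (f x y) m}

/-- The topology induced by a quasimetric function: open balls form a neighbourhood base. -/
def qTopology (S : MVS M) (f : X → X → M) : TopologicalSpace X :=
  TopologicalSpace.mkOfNhds fun x => ⨅ m ∈ {m : M | m ≠ S.e}, Filter.principal (ball S f x m)

/-- Entourage `U_m = {(x,y) | f x y ⊴ m}`. -/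
def ent (S : MVS M) (f : X → X → M) (m : M) : Set (X × X) := {p | S.le (f p.1 p.2) m}

/-- `qcomp A B = A ∘ B = {(x,z) | ∃ y, (x,y) ∈ B ∧ (y,z) ∈ A}`. -/
def qcomp (A B : Set (X × X)) : Set (X × X) := {p | ∃ y, (p.1, y) ∈ B ∧ (y, p.2) ∈ A}

def IsQuasiUniformity (U : Set (Set (X × X))) : Prop :=
  U.Nonempty ∧
  (∀ u ∈ U, ∀ x : X, (x, x) ∈ u) ∧
  (∀ u ∈ U, ∀ v : Set (X × X), u ⊆ v → v ∈ U) ∧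
  (∀ u ∈ U, ∀ v ∈ U, u ∩ v ∈ U) ∧
  (∀ u ∈ U, ∃ v ∈ U, qcomp v v ⊆ u)

def IsBaseOf (B U : Set (Set (X × X))) : Prop := B ⊆ U ∧ ∀ u ∈ U, ∃ b ∈ B, b ⊆ u

/-- `U + V` : the intersection of all entourages `U_n` containing `V ∘ U`. -/
def addEnt (S : MVS M) (f : X → X → M) (A B : Set (X × X)) : Set (X × X) :=
  ⋂₀ {w | (∃ m, ent S f m = w) ∧ qcomp B A ⊆ w}

/-- The topology induced by a base of a quasiuniformity: sections `U[x]` form a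
neighbourhood base. -/
def quTopology (B : Set (Set (X × X))) : TopologicalSpace X :=
  TopologicalSpace.mkOfNhds fun x => ⨅ u ∈ B, Filter.principal {y | (x, y) ∈ u}

/-- `n`-fold sum `m + ⋯ + m`. -/
def nfold (S : MVS M) : ℕ → M → M
  | 0, _ => S.e
  | Nat.succ n, m => S.add m (nfold S n m)

/-!
Off the diagonal, `f₂(p, q)` is the cost of leaving `p = (x₁, m₁, m₂, x₂)` (paying `m₂`),
travelling from `x₂` to the start of `q` along `f₁`, and entering `q`. A detour through
`q = (x₃, m₃, m₄, x₄)` additionally pays `m₃ + m₄ = f₁(x₃, x₄)`, so by the triangle inequality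
of `f₁` it costs at least the direct route. Redefining the diagonal to be `e` keeps the triangle
inequality, since `e ⊴ a` and `a ⊴ a + e` hold in any MVS.
-/

namespace MVS

variable (S : MVS M)

theorem le_refl (a : M) : S.le a a := ⟨S.e, S.add_e a⟩

theorem e_le (a : M) : S.le S.e a := ⟨a, S.e_add a⟩

theorem le_trans {a b c : M} : S.le a b → S.le b c → S.le a c := by
  rintro ⟨d, rfl⟩ ⟨d', rfl⟩
  exact ⟨S.add d d', (S.assoc a d d').symm⟩

instance : Trans S.le S.le S.le := ⟨S.le_trans⟩

theorem add_le_add_left {a b : M} (c : M) : S.le a b → S.le (S.add c a) (S.add c b) := by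
  rintro ⟨d, rfl⟩
  exact ⟨d, S.assoc c a d⟩

theorem add_le_add_right (hc : S.Commutative) {a b : M} (c : M) :
    S.le a b → S.le (S.add a c) (S.add b c) := by
  rintro ⟨d, rfl⟩
  refine ⟨d, ?_⟩
  rw [S.assoc, S.assoc, hc c d]

end MVS

section Distance

variable (S : MVS M)

theorem isQuasimetric_ite_eq {Y : Type*} [DecidableEq Y] (g : Y → Y → M)
    (hg : ∀ p q r, S.le (g p r) (S.add (g p q) (g q r))) :
    IsQuasimetric S (fun p q => if p = q then S.e else g p q) := by
  refine ⟨fun p q r => ?_, fun p => if_pos rfl⟩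
  by_cases hpq : p = q
  · subst hpq
    simp only [if_true, S.e_add]
    exact S.le_refl _
  by_cases hqr : q = r
  · subst hqr
    simp only [if_true, S.add_e]
    exact S.le_refl _
  by_cases hpr : p = r
  · simp only [if_pos hpr]
    exact S.e_le _
  simp only [if_neg hpq, if_neg hqr, if_neg hpr]
  exact hg p q r

variable (f : X → X → M)

/-- For tuples `(x₁, m₁, m₂, x₂)` and `(x₃, m₃, m₄, x₄)` this is `m₂ + f(x₂, x₃) + m₃`. -/
def linkCost (p q : X × M × M × X) : M := S.add (S.add p.2.2.1 (f p.2.2.2 q.1)) q.2.1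

theorem linkCost_le_add (hc : S.Commutative) (hf : IsQuasimetric S f) (p r : X × M × M × X)
    {q : X × M × M × X} (hq : S.add q.2.1 q.2.2.1 = f q.1 q.2.2.2) :
    S.le (linkCost S f p r) (S.add (linkCost S f p q) (linkCost S f q r)) := by
  unfold linkCost
  calc S.le _ (S.add (S.add p.2.2.1 (S.add (f p.2.2.2 q.1) (f q.1 r.1))) r.2.1) :=
        S.add_le_add_right hc _ (S.add_le_add_left _ (hf.1 _ _ _))
    S.le _ (S.add (S.add p.2.2.1
        (S.add (f p.2.2.2 q.1) (S.add (f q.1 q.2.2.2) (f q.2.2.2 r.1)))) r.2.1) :=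
        S.add_le_add_right hc _ (S.add_le_add_left _ (S.add_le_add_left _ (hf.1 _ _ _)))
    _ = _ := by rw [← hq]; simp only [S.assoc]

theorem linkCost_diag (x y : X) :
    linkCost S f (x, S.e, S.e, x) (y, S.e, S.e, y) = f x y := by
  rw [linkCost, S.e_add, S.add_e]

end Distance

open Classical in
theorem stmt_15 (S : MVS M) (hc : S.Commutative) (f1 : X → X → M)
    (hf : IsQuasimetric S f1) :
    IsQuasimetric S
      (fun p q : {p : X × M × M × X // S.add p.2.1 p.2.2.1 = f1 p.1 p.2.2.2} =>
        if p = q then S.e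
        else S.add (S.add p.1.2.2.1 (f1 p.1.2.2.2 q.1.1)) q.1.2.1) ∧
    ∀ x y : X,
      (fun p q : {p : X × M × M × X // S.add p.2.1 p.2.2.1 = f1 p.1 p.2.2.2} =>
        if p = q then S.e
        else S.add (S.add p.1.2.2.1 (f1 p.1.2.2.2 q.1.1)) q.1.2.1)
        ⟨(x, S.e, S.e, x), by rw [hf.2 x]; exact S.add_e S.e⟩
        ⟨(y, S.e, S.e, y), by rw [hf.2 y]; exact S.add_e S.e⟩ = f1 x y := by
  refine ⟨isQuasimetric_ite_eq S _ fun p q r => linkCost_le_add S f1 hc hf p.1 r.1 q.2,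
    fun x y => ?_⟩
  dsimp only
  split_ifs with hxy
  · obtain rfl : x = y := congrArg (fun p => p.1.1) hxy
    exact (hf.2 x).symm
  · exact linkCost_diag S f1 x y
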